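/- Let $u \in C^2(\mathbb{T}^2)$ satisfy $A_{11}[u]A_{22}[u] - (A_{12}[u])^2 \ge E_1 > 0$ everywhere, where $A_{11}[u] = u_{xx} + B_{11}u_y + C_{11} + Du$, $A_{12}[u] = u_{xy} + B_{12}u_y + C_{12}$, $A_{22}[u] = u_{yy} + B_{22}u_y + C_{22}$ with real constants and $D \le 0$, $C_{22} > 0$. Then $u_{yy} + B_{22} u_y + C_{22} > 0$ everywhere and hence $\sup |u_y| \le 2 C_{22} e^{2|B_{22}|}$. -/

import Mathlib

/-!
For fixed `x`, `v = u x` is a periodic function of `y`, and `A₂₂ = v'' + B₂₂ v' + C₂₂`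
cannot vanish since `A₁₁ A₂₂ ≥ E₁ + A₁₂² > 0`. At a minimum of `v` we have `v' = 0 ≤ v''`, so
`A₂₂ ≥ C₂₂ > 0` there and hence everywhere by continuity. Since `K = C₂₂ e^{B₂₂ y + |B₂₂|}`
dominates `C₂₂ e^{B₂₂ t}` for `|t - y| ≤ 1`, positivity of `A₂₂` makes `t ↦ e^{B₂₂ t} v'(t) + K t`
increasing on `[y - 1, y + 1]`; comparing its values at `y` and at zeros of `v'` (Rolle) in
`(y - 1, y)` and `(y, y + 1)` gives `|v'(y)| ≤ C₂₂ e^{|B₂₂|}`.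
-/

open Real

/-- Partial derivative in the first variable. -/
noncomputable def pX (u : ℝ → ℝ → ℝ) : ℝ → ℝ → ℝ := fun x y => deriv (fun s => u s y) x

/-- Partial derivative in the second variable. -/
noncomputable def pY (u : ℝ → ℝ → ℝ) : ℝ → ℝ → ℝ := fun x y => deriv (fun s => u x s) y

/-- `u` is 1-periodic in both variables, i.e. defines a function on the torus `𝕋²`. -/
def Per2 (u : ℝ → ℝ → ℝ) : Prop := ∀ x y : ℝ, u (x + 1) y = u x y ∧ u x (y + 1) = u x y

open Set Filter Topology

theorem IsLocalMin.deriv_deriv_nonneg {f : ℝ → ℝ} {x : ℝ} (h : IsLocalMin f x)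
    (hc : ContinuousAt f x) : 0 ≤ deriv (deriv f) x := by
  by_contra! hneg
  have hmax : IsLocalMax f x := isLocalMax_of_deriv_deriv_neg hneg h.deriv_eq_zero hc
  have hconst : f =ᶠ[𝓝 x] fun _ => f x := (h.and hmax).mono fun _ hy => le_antisymm hy.2 hy.1
  have hderiv : deriv f =ᶠ[𝓝 x] fun _ => 0 :=
    hconst.eventuallyEq_nhds.mono fun _ hy => by rw [hy.deriv_eq, deriv_const]
  rw [hderiv.deriv_eq, deriv_const] at hneg
  exact hneg.false

theorem Function.Periodic.exists_forall_le {f : ℝ → ℝ} {T : ℝ} (hf : Function.Periodic f T)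
    (hT : T ≠ 0) (hc : Continuous f) : ∃ x₀, ∀ x, f x₀ ≤ f x := by
  obtain ⟨_, ⟨x₀, rfl⟩, hmin⟩ :=
    (hf.compact_of_continuous hT hc).exists_isLeast (range_nonempty f)
  exact ⟨x₀, fun x => hmin ⟨x, rfl⟩⟩

theorem Function.Periodic.exists_deriv_eq_zero {f : ℝ → ℝ} {T : ℝ} (hf : Function.Periodic f T)
    (hT : 0 < T) (hc : Continuous f) (a : ℝ) : ∃ c ∈ Ioo a (a + T), deriv f c = 0 :=
  _root_.exists_deriv_eq_zero (by linarith) hc.continuousOn (hf a).symm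

theorem deriv_deriv_add_mul_deriv_add_pos {v : ℝ → ℝ} {T B C : ℝ} (hv : ContDiff ℝ 2 v)
    (hper : Function.Periodic v T) (hT : T ≠ 0) (hC : 0 < C)
    (hne : ∀ y, deriv (deriv v) y + B * deriv v y + C ≠ 0) (y : ℝ) :
    0 < deriv (deriv v) y + B * deriv v y + C := by
  obtain ⟨y₀, hy₀⟩ := hper.exists_forall_le hT hv.continuous
  have hmin : IsLocalMin v y₀ := Eventually.of_forall hy₀
  have hpos₀ : 0 < deriv (deriv v) y₀ + B * deriv v y₀ + C := by
    rw [hmin.deriv_eq_zero]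
    linarith [hmin.deriv_deriv_nonneg hv.continuous.continuousAt]
  have hA : Continuous fun y => deriv (deriv v) y + B * deriv v y + C := by
    have h2 : Continuous (deriv (deriv v)) := (hv.deriv' (n := 1)).continuous_deriv le_rfl
    have h1 : Continuous (deriv v) := hv.differentiable_deriv_two.continuous
    fun_prop
  by_contra! hy
  obtain ⟨c, hc⟩ := intermediate_value_univ y y₀ hA ⟨hy, hpos₀.le⟩
  exact hne c hc

theorem monotoneOn_exp_mul_mul_add {w : ℝ → ℝ} {B C T y : ℝ} (hw : Differentiable ℝ w)
    (hC : 0 ≤ C) (hsub : ∀ t, 0 ≤ deriv w t + B * w t + C) :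
    MonotoneOn (fun t => exp (B * t) * w t + exp (B * y) * (C * exp (|B| * T)) * t)
      (Icc (y - T) (y + T)) := by
  have hdiff :
      Differentiable ℝ fun t => exp (B * t) * w t + exp (B * y) * (C * exp (|B| * T)) * t := by
    fun_prop
  refine monotoneOn_of_deriv_nonneg (convex_Icc _ _) hdiff.continuous.continuousOn
    hdiff.differentiableOn fun t ht => ?_
  rw [interior_Icc] at ht
  have hexp : exp (B * t) ≤ exp (B * y) * exp (|B| * T) := by
    have hty : |t - y| ≤ T := abs_sub_le_iff.mpr ⟨by linarith [ht.2], by linarith [ht.1]⟩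
    have hB : B * (t - y) ≤ |B| * T :=
      ((le_abs_self _).trans_eq (abs_mul _ _)).trans (mul_le_mul_of_nonneg_left hty (abs_nonneg B))
    rw [← exp_add, exp_le_exp]
    linarith
  have hd : deriv (fun t => exp (B * t) * w t + exp (B * y) * (C * exp (|B| * T)) * t) t
      = exp (B * t) * (deriv w t + B * w t) + exp (B * y) * (C * exp (|B| * T)) := by
    have hexpd : HasDerivAt (fun t => exp (B * t)) (exp (B * t) * B) t := by
      simpa using ((hasDerivAt_id t).const_mul B).exp
    refine ((hexpd.mul (hw t).hasDerivAt).add ((hasDerivAt_id t).const_mul _)).deriv.trans ?_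
    ring
  rw [hd]
  nlinarith [mul_nonneg (exp_pos (B * t)).le (hsub t), mul_le_mul_of_nonneg_right hexp hC]

theorem abs_le_of_deriv_add_mul_add_nonneg {w : ℝ → ℝ} {B C T : ℝ} (hw : Differentiable ℝ w)
    (hC : 0 ≤ C) (hzero : ∀ a, ∃ c ∈ Ioo a (a + T), w c = 0)
    (hsub : ∀ t, 0 ≤ deriv w t + B * w t + C) (y : ℝ) :
    |w y| ≤ C * T * exp (|B| * T) := by
  have hmono := monotoneOn_exp_mul_mul_add (y := y) (T := T) hw hC hsub
  set M := C * exp (|B| * T)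
  have hM₀ : 0 ≤ M := by positivity
  obtain ⟨c₁, hc₁, hw₁⟩ := hzero (y - T)
  rw [sub_add_cancel] at hc₁
  obtain ⟨c₂, hc₂, hw₂⟩ := hzero y
  have hy : y ∈ Icc (y - T) (y + T) := ⟨by linarith [hc₂.1, hc₂.2], by linarith [hc₂.1, hc₂.2]⟩
  have hlow : exp (B * y) * (M * c₁) ≤ exp (B * y) * (w y + M * y) := by
    have := hmono ⟨hc₁.1.le, by linarith [hc₁.2, hy.2]⟩ hy hc₁.2.le
    simp only [hw₁] at this
    linarith
  have hup : exp (B * y) * (w y + M * y) ≤ exp (B * y) * (M * c₂) := by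
    have := hmono hy ⟨by linarith [hc₂.1, hy.1], hc₂.2.le⟩ hc₂.1.le
    simp only [hw₂] at this
    linarith
  replace hlow := le_of_mul_le_mul_left hlow (exp_pos _)
  replace hup := le_of_mul_le_mul_left hup (exp_pos _)
  rw [abs_le, mul_right_comm]
  constructor <;> nlinarith [hc₁.1, hc₂.2]

theorem stmt15_general (u : ℝ → ℝ → ℝ)
    (hu : ContDiff ℝ 2 (fun p : ℝ × ℝ => u p.1 p.2)) (huper : Per2 u)
    (B₁₁ B₁₂ B₂₂ C₁₁ C₁₂ C₂₂ D E₁ : ℝ) (hC₂₂ : C₂₂ > 0) (hE₁ : E₁ > 0)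
    (heq : ∀ x y : ℝ,
      (pX (pX u) x y + B₁₁ * pY u x y + C₁₁ + D * u x y) *
        (pY (pY u) x y + B₂₂ * pY u x y + C₂₂) -
      (pX (pY u) x y + B₁₂ * pY u x y + C₁₂) ^ 2 ≥ E₁) :
    (∀ x y : ℝ, pY (pY u) x y + B₂₂ * pY u x y + C₂₂ > 0) ∧
    ∀ x y : ℝ, |pY u x y| ≤ 2 * C₂₂ * Real.exp (2 * |B₂₂|) := by
  have hline : ∀ x, ContDiff ℝ 2 (u x) := fun x => hu.comp (contDiff_const.prodMk contDiff_id)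
  have hper : ∀ x, Function.Periodic (u x) 1 := fun x y => (huper x y).2
  have hne : ∀ x y, pY (pY u) x y + B₂₂ * pY u x y + C₂₂ ≠ 0 := by
    intro x y h₀
    have := heq x y
    rw [h₀, mul_zero] at this
    linarith [sq_nonneg (pX (pY u) x y + B₁₂ * pY u x y + C₁₂)]
  have hpos : ∀ x y, pY (pY u) x y + B₂₂ * pY u x y + C₂₂ > 0 := fun x =>
    deriv_deriv_add_mul_deriv_add_pos (hline x) (hper x) one_ne_zero hC₂₂ (hne x)
  refine ⟨hpos, fun x y => ?_⟩
  calc |pY u x y| ≤ C₂₂ * 1 * exp (|B₂₂| * 1) :=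
        abs_le_of_deriv_add_mul_add_nonneg (hline x).differentiable_deriv_two
          hC₂₂.le ((hper x).exists_deriv_eq_zero one_pos (hline x).continuous)
          (fun t => (hpos x t).le) y
    _ ≤ 2 * C₂₂ * exp (2 * |B₂₂|) := by
        rw [mul_one, mul_one]
        gcongr
        · linarith
        · linarith [abs_nonneg B₂₂]

/-- Positivity of `A₂₂[u]` and the resulting gradient bound `|u_y| ≤ 2 C₂₂ e^{2|B₂₂|}`
for subsolutions of the generalized Monge–Ampère inequality. -/
theorem stmt15 (u : ℝ → ℝ → ℝ)
    (hu : ContDiff ℝ 2 (fun p : ℝ × ℝ => u p.1 p.2)) (huper : Per2 u)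
    (B₁₁ B₁₂ B₂₂ C₁₁ C₁₂ C₂₂ D E₁ : ℝ) (hD : D ≤ 0) (hC₂₂ : C₂₂ > 0) (hE₁ : E₁ > 0)
    (heq : ∀ x y : ℝ,
      (pX (pX u) x y + B₁₁ * pY u x y + C₁₁ + D * u x y) *
        (pY (pY u) x y + B₂₂ * pY u x y + C₂₂) -
      (pX (pY u) x y + B₁₂ * pY u x y + C₁₂) ^ 2 ≥ E₁) :
    (∀ x y : ℝ, pY (pY u) x y + B₂₂ * pY u x y + C₂₂ > 0) ∧
    ∀ x y : ℝ, |pY u x y| ≤ 2 * C₂₂ * Real.exp (2 * |B₂₂|) :=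
  stmt15_general u hu huper B₁₁ B₁₂ B₂₂ C₁₁ C₁₂ C₂₂ D E₁ hC₂₂ hE₁ heq
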